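/- Let E : ℝ^d → ℝ be convex, differentiable, and supercoercive (E(x)/|x| → ∞ as |x| → ∞), and define the convex conjugate E*(y) = sup_{x ∈ ℝ^d} ( y·x − E(x) ), which is finite for every y ∈ ℝ^d. Let 0 < T < ∞ and u⁰ ∈ ℝ^d, and for v ∈ C¹([0,T]; ℝ^d) with v(0) = u⁰ define G(v) = ∫_0^T ( E(v(t)) + E*(−v'(t)) ) dt + (1/2)|v(T)|² − (1/2)|u⁰|². Then G(v) ≥ 0 for every such v, and G(v) = 0 if and only if v'(t) + ∇E(v(t)) = 0 for all t ∈ [0,T]. -/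

import Mathlib

/-!
By Fenchel–Young, `E x + E* y ≥ ⟪y, x⟫`, with equality exactly when `y = ∇E x`: a maximiser of
the concave function `⟪y, ·⟫ - E` is a critical point, and conversely the gradient inequality of
a convex function makes a critical point a maximiser. Since `∫₀ᵀ ⟪v', v⟫ = ½‖v T‖² - ½‖v 0‖²`,
`G(v)` is the integral over `[0, T]` of the Fenchel gap `E (v t) + E* (-v' t) - ⟪-v' t, v t⟫`,
which is nonnegative and continuous, so `G(v) = 0` iff the gap vanishes on `[0, T]`, i.e. iff
`-v' = ∇E ∘ v` there. Supercoercivity makes `⟪y, ·⟫ - E` tend to `-∞`, so `E*` is finite; as a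
finite convex function on a finite-dimensional space it is continuous.
-/

open scoped RealInnerProductSpace

open Set Filter InnerProductSpace

theorem ConvexOn.add_fderiv_sub_le {V : Type*} [NormedAddCommGroup V] [NormedSpace ℝ V]
    {E : V → ℝ} {E' : V →L[ℝ] ℝ} {x : V} (hconv : ConvexOn ℝ univ E) (hE : HasFDerivAt E E' x)
    (z : V) : E x + E' (z - x) ≤ E z := by
  have hE₀ : HasFDerivAt E E' (AffineMap.lineMap x z (0 : ℝ)) := by
    rwa [AffineMap.lineMap_apply_zero]
  have hline := hE₀.comp_hasDerivAt (0 : ℝ) AffineMap.hasDerivAt_lineMap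
  have := (hconv.comp_affineMap (AffineMap.lineMap x z)).le_slope_of_hasDerivAt
    (mem_univ 0) (mem_univ 1) zero_lt_one hline
  simp only [slope_def_field, Function.comp_apply, AffineMap.lineMap_apply_one,
    AffineMap.lineMap_apply_zero, sub_zero, div_one] at this
  linarith

section Conjugate

variable {F : Type*} [NormedAddCommGroup F] [InnerProductSpace ℝ F] {E : F → ℝ}

-- `sSup` of a range that is not bounded above is `0`, hence the `BddAbove` hypotheses below.
noncomputable def convexConjugate (E : F → ℝ) (y : F) : ℝ :=
  sSup (range fun x => ⟪y, x⟫ - E x)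

theorem inner_sub_le_convexConjugate {y : F} (hbdd : BddAbove (range fun x => ⟪y, x⟫ - E x))
    (x : F) : ⟪y, x⟫ - E x ≤ convexConjugate E y :=
  le_csSup hbdd ⟨x, rfl⟩

theorem convexOn_convexConjugate (hbdd : ∀ y, BddAbove (range fun x => ⟪y, x⟫ - E x)) :
    ConvexOn ℝ univ (convexConjugate E) := by
  refine ⟨convex_univ, fun y₁ _ y₂ _ p q hp hq hpq => csSup_le (range_nonempty _) ?_⟩
  rintro _ ⟨x, rfl⟩
  calc ⟪p • y₁ + q • y₂, x⟫ - E x = p * (⟪y₁, x⟫ - E x) + q * (⟪y₂, x⟫ - E x) := by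
        rw [inner_add_left, real_inner_smul_left, real_inner_smul_left]
        linear_combination E x * hpq
    _ ≤ p * convexConjugate E y₁ + q * convexConjugate E y₂ := by
        gcongr <;> exact inner_sub_le_convexConjugate (hbdd _) x

theorem continuous_convexConjugate [FiniteDimensional ℝ F]
    (hbdd : ∀ y, BddAbove (range fun x => ⟪y, x⟫ - E x)) : Continuous (convexConjugate E) :=
  continuousOn_univ.1 <| (convexOn_convexConjugate hbdd).continuousOn isOpen_univ

theorem bddAbove_range_inner_sub_of_superlinear [ProperSpace F] (hE : Continuous E)
    (hsuper : Tendsto (fun x => E x / ‖x‖) (Bornology.cobounded F) atTop) (y : F) :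
    BddAbove (range fun x => ⟪y, x⟫ - E x) := by
  have hlower : ∀ᶠ x in Bornology.cobounded F, ‖x‖ * (E x / ‖x‖ - ‖y‖) ≤ E x - ⟪y, x⟫ := by
    filter_upwards [hsuper.eventually_gt_atTop 0] with x hx
    have hx0 : ‖x‖ ≠ 0 := fun h => by simp [h] at hx
    have := real_inner_le_norm y x
    rw [mul_sub, mul_div_cancel₀ _ hx0]
    linarith [mul_comm ‖x‖ ‖y‖]
  have hgrowth : Tendsto (fun x => E x - ⟪y, x⟫) (Bornology.cobounded F) atTop :=
    tendsto_atTop_mono' _ hlower <| tendsto_norm_cobounded_atTop.atTop_mul_atTop₀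
      (tendsto_atTop_add_const_right _ _ hsuper)
  obtain ⟨x₀, hx₀⟩ := (continuous_const.inner continuous_id |>.sub hE).exists_forall_ge
    (f := fun x => ⟪y, x⟫ - E x) (by
      rw [← Metric.cobounded_eq_cocompact]
      exact (tendsto_neg_atTop_atBot.comp hgrowth).congr fun x => neg_sub _ _)
  exact ⟨_, forall_mem_range.2 hx₀⟩

noncomputable def fenchelGap (E : F → ℝ) (x y : F) : ℝ :=
  E x + convexConjugate E y - ⟪y, x⟫

theorem fenchelGap_nonneg {y : F} (hbdd : BddAbove (range fun z => ⟪y, z⟫ - E z)) (x : F) :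
    0 ≤ fenchelGap E x y := by
  rw [fenchelGap, sub_nonneg]
  linarith [inner_sub_le_convexConjugate hbdd x]

theorem fenchelGap_eq_zero_iff [CompleteSpace F] {x y : F} (hconv : ConvexOn ℝ univ E)
    (hdiff : DifferentiableAt ℝ E x) (hbdd : BddAbove (range fun z => ⟪y, z⟫ - E z)) :
    fenchelGap E x y = 0 ↔ y = gradient E x := by
  have hgrad := hdiff.hasGradientAt.hasFDerivAt
  rw [fenchelGap, sub_eq_zero]
  constructor
  · intro heq
    have hmax : IsLocalMax (fun z => ⟪y, z⟫ - E z) x :=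
      (isMaxOn_univ_iff.2 fun z => by linarith [inner_sub_le_convexConjugate hbdd z]).isLocalMax
        univ_mem
    have hderiv : HasFDerivAt (fun z => ⟪y, z⟫ - E z)
        (toDual ℝ F y - toDual ℝ F (gradient E x)) x :=
      (toDual ℝ F y : F →L[ℝ] ℝ).hasFDerivAt.sub hgrad
    exact (toDual ℝ F).injective (sub_eq_zero.1 (hmax.hasFDerivAt_eq_zero hderiv))
  · rintro rfl
    refine le_antisymm ?_ (by linarith [inner_sub_le_convexConjugate hbdd x])
    suffices convexConjugate E (gradient E x) ≤ ⟪gradient E x, x⟫ - E x by linarith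
    refine csSup_le (range_nonempty _) (forall_mem_range.2 fun z => ?_)
    have := hconv.add_fderiv_sub_le hgrad z
    rw [toDual_apply_apply, inner_sub_right] at this
    linarith

theorem ContinuousOn.fenchelGap [FiniteDimensional ℝ F] {X : Type*} [TopologicalSpace X]
    {x y : X → F} {s : Set X} (hE : Continuous E)
    (hbdd : ∀ y, BddAbove (range fun z => ⟪y, z⟫ - E z)) (hx : ContinuousOn x s)
    (hy : ContinuousOn y s) : ContinuousOn (fun t => fenchelGap E (x t) (y t)) s :=
  ((hE.comp_continuousOn hx).add ((continuous_convexConjugate hbdd).comp_continuousOn hy)).sub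
    (hy.inner hx)

end Conjugate

theorem integral_inner_eq_sub_half_norm_sq {F : Type*} [NormedAddCommGroup F]
    [InnerProductSpace ℝ F] {v v' : ℝ → F} {a b : ℝ} (hab : a ≤ b)
    (hv : ∀ t ∈ Icc a b, HasDerivWithinAt v (v' t) (Icc a b) t) (hv' : ContinuousOn v' (Icc a b)) :
    ∫ t in a..b, ⟪v' t, v t⟫ = ‖v b‖ ^ 2 / 2 - ‖v a‖ ^ 2 / 2 := by
  have hvc : ContinuousOn v (Icc a b) := fun t ht => (hv t ht).continuousWithinAt
  refine intervalIntegral.integral_eq_sub_of_hasDerivAt_of_le hab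
    ((hvc.norm.pow 2).div_const 2) (fun t ht => ?_)
    ((hv'.inner hvc).intervalIntegrable_of_Icc hab)
  have := ((hv t (Ioo_subset_Icc_self ht)).hasDerivAt (Icc_mem_nhds ht.1 ht.2)).norm_sq.div_const 2
  simpa [real_inner_comm] using this

theorem intervalIntegral.integral_eq_zero_iff_of_continuousOn_of_nonneg {f : ℝ → ℝ} {a b : ℝ}
    (hab : a < b) (hf : ContinuousOn f (Icc a b)) (hf₀ : ∀ t ∈ Icc a b, 0 ≤ f t) :
    ∫ t in a..b, f t = 0 ↔ ∀ t ∈ Icc a b, f t = 0 := by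
  refine ⟨fun h t ht => (hf₀ t ht).antisymm' (not_lt.1 fun hpos => ?_), fun h => ?_⟩
  · exact (intervalIntegral.integral_pos hab hf (fun s hs => hf₀ s (Ioc_subset_Icc_self hs))
      ⟨t, ht, hpos⟩).ne' h
  · rw [intervalIntegral.integral_congr (g := fun _ => 0) (by rwa [uIcc_of_le hab.le]),
      intervalIntegral.integral_zero]

section BrezisEkelandNayroles

variable {F : Type*} [NormedAddCommGroup F] [InnerProductSpace ℝ F] [FiniteDimensional ℝ F]
  {E : F → ℝ} {T : ℝ} {v v' : ℝ → F}

noncomputable def brezisEkelandFunctional (E : F → ℝ) (T : ℝ) (v v' : ℝ → F) : ℝ :=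
  (∫ t in (0 : ℝ)..T, (E (v t) + convexConjugate E (-v' t)))
    + (1 / 2) * ‖v T‖ ^ 2 - (1 / 2) * ‖v 0‖ ^ 2

theorem brezisEkelandFunctional_eq_integral_fenchelGap (hE : Continuous E)
    (hbdd : ∀ y, BddAbove (range fun z => ⟪y, z⟫ - E z)) (hT : 0 ≤ T)
    (hv : ∀ t ∈ Icc 0 T, HasDerivWithinAt v (v' t) (Icc 0 T) t) (hv' : ContinuousOn v' (Icc 0 T)) :
    brezisEkelandFunctional E T v v' = ∫ t in (0 : ℝ)..T, fenchelGap E (v t) (-v' t) := by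
  have hvc : ContinuousOn v (Icc 0 T) := fun t ht => (hv t ht).continuousWithinAt
  have hsum : ContinuousOn (fun t => E (v t) + convexConjugate E (-v' t)) (Icc 0 T) :=
    (hE.comp_continuousOn hvc).add ((continuous_convexConjugate hbdd).comp_continuousOn hv'.neg)
  simp only [fenchelGap, inner_neg_left, sub_neg_eq_add]
  rw [intervalIntegral.integral_add (hsum.intervalIntegrable_of_Icc hT)
      ((hv'.inner hvc).intervalIntegrable_of_Icc hT),
    integral_inner_eq_sub_half_norm_sq hT hv hv', brezisEkelandFunctional]
  ring

theorem brezisEkelandFunctional_nonneg (hE : Continuous E)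
    (hbdd : ∀ y, BddAbove (range fun z => ⟪y, z⟫ - E z)) (hT : 0 ≤ T)
    (hv : ∀ t ∈ Icc 0 T, HasDerivWithinAt v (v' t) (Icc 0 T) t) (hv' : ContinuousOn v' (Icc 0 T)) :
    0 ≤ brezisEkelandFunctional E T v v' := by
  rw [brezisEkelandFunctional_eq_integral_fenchelGap hE hbdd hT hv hv']
  exact intervalIntegral.integral_nonneg hT fun t _ => fenchelGap_nonneg (hbdd _) _

theorem brezisEkelandFunctional_eq_zero_iff (hconv : ConvexOn ℝ univ E)
    (hdiff : Differentiable ℝ E) (hbdd : ∀ y, BddAbove (range fun z => ⟪y, z⟫ - E z)) (hT : 0 < T)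
    (hv : ∀ t ∈ Icc 0 T, HasDerivWithinAt v (v' t) (Icc 0 T) t) (hv' : ContinuousOn v' (Icc 0 T)) :
    brezisEkelandFunctional E T v v' = 0 ↔ ∀ t ∈ Icc 0 T, v' t + gradient E (v t) = 0 := by
  have hvc : ContinuousOn v (Icc 0 T) := fun t ht => (hv t ht).continuousWithinAt
  rw [brezisEkelandFunctional_eq_integral_fenchelGap hdiff.continuous hbdd hT.le hv hv',
    intervalIntegral.integral_eq_zero_iff_of_continuousOn_of_nonneg hT
      (hvc.fenchelGap (y := fun t => -v' t) hdiff.continuous hbdd hv'.neg)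
      fun t _ => fenchelGap_nonneg (hbdd _) _]
  refine forall₂_congr fun t _ => ?_
  rw [fenchelGap_eq_zero_iff hconv (hdiff _) (hbdd _), neg_eq_iff_eq_neg, eq_neg_iff_add_eq_zero]

end BrezisEkelandNayroles

/-- Brezis–Ekeland–Nayroles principle. Let `E : ℝ^d → ℝ` be convex,
differentiable and supercoercive, and let `E*(y) = sup_x (y·x − E(x))` be its convex
conjugate. Then `E*` is finite everywhere (the supremum is bounded above) and, for
`0 < T < ∞`, `a = u⁰ ∈ ℝ^d` and every `v ∈ C¹([0,T];ℝ^d)` (derivative `v'`) with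
`v(0) = u⁰`, the functional
`G(v) = ∫_0^T (E(v) + E*(−v')) dt + (1/2)|v(T)|² − (1/2)|u⁰|²`
satisfies `G(v) ≥ 0`, with `G(v) = 0` iff `v' + ∇E(v) = 0` on `[0,T]`. -/
theorem brezis_ekeland_nayroles_principle (d : ℕ) (T : ℝ) (hT : 0 < T)
    (E : EuclideanSpace ℝ (Fin d) → ℝ)
    (hconv : ConvexOn ℝ Set.univ E) (hdiff : Differentiable ℝ E)
    (hsuper : Filter.Tendsto (fun x : EuclideanSpace ℝ (Fin d) => E x / ‖x‖)
      (Bornology.cobounded _) Filter.atTop)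
    (a : EuclideanSpace ℝ (Fin d)) :
    (∀ y : EuclideanSpace ℝ (Fin d),
        BddAbove (Set.range fun x : EuclideanSpace ℝ (Fin d) => ⟪y, x⟫ - E x))
      ∧ ∀ v v' : ℝ → EuclideanSpace ℝ (Fin d),
          (∀ t ∈ Set.Icc (0 : ℝ) T, HasDerivWithinAt v (v' t) (Set.Icc 0 T) t) →
          ContinuousOn v' (Set.Icc 0 T) → v 0 = a →
          (0 ≤ (∫ t in (0 : ℝ)..T, (E (v t)
                  + sSup (Set.range fun x : EuclideanSpace ℝ (Fin d) => ⟪-v' t, x⟫ - E x)))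
                + (1 / 2) * ‖v T‖ ^ 2 - (1 / 2) * ‖a‖ ^ 2
            ∧ ((∫ t in (0 : ℝ)..T, (E (v t)
                  + sSup (Set.range fun x : EuclideanSpace ℝ (Fin d) => ⟪-v' t, x⟫ - E x)))
                + (1 / 2) * ‖v T‖ ^ 2 - (1 / 2) * ‖a‖ ^ 2 = 0
              ↔ ∀ t ∈ Set.Icc (0 : ℝ) T, v' t + gradient E (v t) = 0)) := by
  have hbdd := bddAbove_range_inner_sub_of_superlinear hdiff.continuous hsuper
  refine ⟨hbdd, fun v v' hv hv' hv₀ => ?_⟩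
  subst hv₀
  exact ⟨brezisEkelandFunctional_nonneg hdiff.continuous hbdd hT.le hv hv',
    brezisEkelandFunctional_eq_zero_iff hconv hdiff hbdd hT hv hv'⟩
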